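/- arXiv:math/0001101 — 2 statements merged into one kernel-verified Lean document; each statement's English description precedes it below -/
import Mathlib

section
/- Let K be a subring of ℂ, let ℤ ⊆ Λ ⊆ ℚ be an additive subgroup, and let H be a subgroup of finite index n in a group G. If H fulfills the Atiyah conjecture of order Λ over KH, then G fulfills the Atiyah conjecture of order (1/n)Λ := {λ/n : λ ∈ Λ} over KG. -/
noncomputable section

open scoped ENNReal

instance : Fact ((1 : ℝ≥0∞) ≤ 2) := ⟨one_le_two⟩

/-- The Hilbert space `ℓ²(G)ⁿ`, modeled as square-summable families indexed by
`Fin n × G`. -/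
abbrev L2 (G : Type*) (n : ℕ) : Type _ := lp (fun _ : Fin n × G => ℂ) 2

variable {G : Type*} [Group G]

/-- Convolution of a group ring element `a ∈ ℂG` with a function `x : G → ℂ`:
`(a ⋆ x)(g) = ∑_h a(h) · x(h⁻¹g)` (a finite sum over the support of `a`). -/
def conv (a : MonoidAlgebra ℂ G) (x : G → ℂ) (g : G) : ℂ :=
  ∑ h ∈ a.coeff.support, a.coeff h * x (h⁻¹ * g)

/-- The kernel of the bounded operator `ℓ²(G)ⁿ → ℓ²(G)ᵐ` given by left convolution
with the matrix `A` over the group ring `ℂG`. -/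
def matrixKernel {m n : ℕ} (A : Matrix (Fin m) (Fin n) (MonoidAlgebra ℂ G)) :
    Submodule ℂ (L2 G n) where
  carrier := {x | ∀ (i : Fin m) (g : G),
    ∑ j : Fin n, conv (A i j) (fun g' => x (j, g')) g = 0}
  zero_mem' := by
    intro i g
    simp [conv]
  add_mem' := by
    intro x y hx hy i g
    have hx' := hx i g
    have hy' := hy i g
    simp only [conv, lp.coeFn_add, Pi.add_apply, mul_add, Finset.sum_add_distrib] at *
    rw [hx', hy', add_zero]
  smul_mem' := by
    intro c x hx i g
    have hx' := hx i g
    simp only [conv, lp.coeFn_smul, Pi.smul_apply, smul_eq_mul] at *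
    have : (∑ j : Fin _, ∑ h ∈ (A i j).coeff.support, (A i j).coeff h * (c * x (j, h⁻¹ * g)))
        = c * ∑ j : Fin _, ∑ h ∈ (A i j).coeff.support, (A i j).coeff h * x (j, h⁻¹ * g) := by
      rw [Finset.mul_sum]
      exact Finset.sum_congr rfl fun j _ => by
        rw [Finset.mul_sum]
        exact Finset.sum_congr rfl fun h _ => by ring
    rw [this, hx', mul_zero]

/-- The vector `eᵢ ∈ ℓ²(G)ⁿ` whose `i`-th coordinate is the characteristic function
of the identity element of `G` and whose other coordinates vanish. -/
def stdVec (G : Type*) [Group G] (n : ℕ) (i : Fin n) : L2 G n :=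
  letI : DecidableEq (Fin n × G) := Classical.decEq _
  lp.single 2 (i, (1 : G)) 1

/-- The von Neumann dimension `dim_G(ker A) = ∑ᵢ ⟨P eᵢ, eᵢ⟩` where `P` is the
orthogonal projection of `ℓ²(G)ⁿ` onto the (closed) kernel of `A`. -/
def dimKer {m n : ℕ} (A : Matrix (Fin m) (Fin n) (MonoidAlgebra ℂ G)) : ℝ :=
  letI S := (matrixKernel A).topologicalClosure
  haveI : CompleteSpace S := (Submodule.isClosed_topologicalClosure _).completeSpace_coe
  ∑ i : Fin n,
    (inner ℂ ((S.orthogonalProjectionOnto (stdVec G n i) : L2 G n)) (stdVec G n i) : ℂ).re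

/-- `G` fulfills the Atiyah conjecture of order `Λ` over `KG` (for `K ⊆ ℂ`):
the von Neumann dimension of the kernel of any matrix over `KG` lies in `Λ`. -/
def AtiyahOfOrder (G : Type*) [Group G] (K : Subring ℂ) (Λ : AddSubgroup ℚ) : Prop :=
  ∀ (m n : ℕ) (A : Matrix (Fin m) (Fin n) (MonoidAlgebra ℂ G)),
    (∀ i j g, (A i j).coeff g ∈ K) → ∃ q ∈ Λ, (q : ℝ) = dimKer A

/-- The additive subgroup of `ℚ` generated by the inverses of the orders of the
finite subgroups of `G`. -/
def strongLambda (G : Type*) [Group G] : AddSubgroup ℚ :=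
  AddSubgroup.closure {q : ℚ | ∃ F : Subgroup G, (F : Set G).Finite ∧ q = 1 / (Nat.card F : ℚ)}

/-- The strong Atiyah conjecture for `G` over `KG`. -/
def StrongAtiyah (G : Type*) [Group G] (K : Subring ℂ) : Prop :=
  AtiyahOfOrder G K (strongLambda G)

/-- The strong Atiyah conjecture over `KG` in the torsion-free case: all kernel
dimensions of matrices over `KG` are integers. -/
def StrongAtiyahInt (G : Type*) [Group G] (K : Subring ℂ) : Prop :=
  ∀ (m n : ℕ) (A : Matrix (Fin m) (Fin n) (MonoidAlgebra ℂ G)),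
    (∀ i j g, (A i j).coeff g ∈ K) → ∃ k : ℤ, (k : ℝ) = dimKer A

/-- The rationals, as a subring of `ℂ`. -/
def ratSubring : Subring ℂ := (algebraMap ℚ ℂ).range

/-!
Enumerate the `r = [G : H]` cosets by `σ` and use the transversal `Quotient.out`. Writing
`g = s.out * h` identifies `ℓ²(G)` with `ℓ²(H)ʳ`, and under this unitary left convolution by
`a ∈ ℂG` becomes the `r × r` matrix over `ℂH` with `(t, s)` entry `k ↦ a (t.out * k * s.out⁻¹)`.
An `m × n` matrix `A` over `KG` thus becomes an `mr × nr` matrix `B` over `KH`, and the unitary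
`ℓ²(H)^{nr} ≅ ℓ²(G)ⁿ` carries `ker B` onto `ker A`. It sends the standard vector of `B` at
`(j, s)` to `δ_(j, s.out)`, and right translation by `s.out` commutes with `A`, so each of these
`r` vectors contributes `⟨P eⱼ, eⱼ⟩`. Hence `dim_H ker B = r · dim_G ker A`.
-/

open scoped InnerProductSpace

section Reindex

variable {𝕜 E α β : Type*} [NormedAddCommGroup E] {p : ℝ≥0∞}

theorem Memℓp.comp_equiv {f : β → E} (hf : Memℓp f p) (e : α ≃ β) : Memℓp (f ∘ e) p := by
  rcases p.trichotomy with rfl | rfl | hp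
  · exact memℓp_zero ((memℓp_zero_iff.1 hf).preimage e.injective.injOn)
  · refine memℓp_infty ?_
    change BddAbove (Set.range ((fun b => ‖f b‖) ∘ e))
    simpa only [e.surjective.range_comp] using memℓp_infty_iff.1 hf
  · exact memℓp_gen (e.summable_iff.2 ((memℓp_gen_iff hp).1 hf))

variable (𝕜) [NormedRing 𝕜] [Module 𝕜 E] [IsBoundedSMul 𝕜 E] [Fact (1 ≤ p)]

def lpCongr (e : α ≃ β) : lp (fun _ : α => E) p ≃ₗᵢ[𝕜] lp (fun _ : β => E) p where
  toFun x := ⟨x ∘ e.symm, (lp.memℓp x).comp_equiv e.symm⟩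
  invFun y := ⟨y ∘ e, (lp.memℓp y).comp_equiv e⟩
  left_inv x := by ext; simp
  right_inv y := by ext; simp
  map_add' _ _ := rfl
  map_smul' _ _ := rfl
  norm_map' x := by
    rcases p.dichotomy with rfl | hp
    · simp only [lp.norm_eq_ciSup]
      exact e.symm.iSup_comp (g := fun a => ‖x a‖)
    · have hp : 0 < p.toReal := zero_lt_one.trans_le hp
      simp only [lp.norm_eq_tsum_rpow hp]
      congr 1
      exact e.symm.tsum_eq (fun a => ‖x a‖ ^ p.toReal)

variable {𝕜}

@[simp]
theorem lpCongr_apply (e : α ≃ β) (x : lp (fun _ : α => E) p) (b : β) :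
    lpCongr 𝕜 e x b = x (e.symm b) := rfl

@[simp]
theorem lpCongr_symm_apply (e : α ≃ β) (y : lp (fun _ : β => E) p) (a : α) :
    (lpCongr 𝕜 e).symm y a = y (e a) := rfl

theorem lpCongr_single [DecidableEq α] [DecidableEq β] (e : α ≃ β) (a : α) (c : E) :
    lpCongr 𝕜 e (lp.single p a c) = lp.single p (e a) c := by
  ext b
  simp [Pi.single_apply, e.symm_apply_eq]

end Reindex

section ClosureProjection

variable {𝕜 E F : Type*} [RCLike 𝕜]
  [NormedAddCommGroup E] [InnerProductSpace 𝕜 E] [NormedAddCommGroup F] [InnerProductSpace 𝕜 F]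

theorem Submodule.topologicalClosure_map_linearIsometryEquiv (U : E ≃ₗᵢ[𝕜] F)
    (p : Submodule 𝕜 E) :
    (p.map (U.toLinearEquiv : E →ₗ[𝕜] F)).topologicalClosure
      = p.topologicalClosure.map (U.toLinearEquiv : E →ₗ[𝕜] F) := by
  apply SetLike.coe_injective
  simpa using (U.toHomeomorph.image_closure (p : Set E)).symm

variable [CompleteSpace E] [CompleteSpace F]

def closureProjCoeff (p : Submodule 𝕜 E) (v : E) : ℝ :=
  RCLike.re ⟪p.topologicalClosure.starProjection v, v⟫_𝕜

theorem closureProjCoeff_map (U : E ≃ₗᵢ[𝕜] F) (p : Submodule 𝕜 E) (v : E) :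
    closureProjCoeff (p.map (U.toLinearEquiv : E →ₗ[𝕜] F)) (U v) = closureProjCoeff p v := by
  simp only [closureProjCoeff, p.topologicalClosure_map_linearIsometryEquiv U,
    Submodule.starProjection_map_apply, U.symm_apply_apply, U.inner_map_map]

end ClosureProjection

theorem dimKer_eq_sum {m n : ℕ} (A : Matrix (Fin m) (Fin n) (MonoidAlgebra ℂ G)) :
    dimKer A = ∑ i, closureProjCoeff (matrixKernel A) (stdVec G n i) := rfl

theorem stdVec_eq_single [DecidableEq G] (n : ℕ) (i : Fin n) :
    stdVec G n i = lp.single 2 (i, 1) 1 := by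
  unfold stdVec
  congr
  exact Subsingleton.elim _ _

section Cosets

variable (H : Subgroup G)

def cosetEquiv : (G ⧸ H) × H ≃ G where
  toFun p := p.1.out * p.2
  invFun g := ((g : G ⧸ H), ⟨(g : G ⧸ H).out⁻¹ * g, by
    rw [← QuotientGroup.eq, QuotientGroup.out_eq']⟩)
  left_inv := by
    rintro ⟨c, h⟩
    have hc : ((c.out * h : G) : G ⧸ H) = c := by
      rw [QuotientGroup.mk_mul_of_mem _ h.2, QuotientGroup.out_eq']
    ext
    · exact hc
    · simp [hc]
  right_inv g := by simp

@[simp]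
theorem cosetEquiv_apply (c : G ⧸ H) (h : H) : cosetEquiv H (c, h) = c.out * h := rfl

def blockIndex (t s : G ⧸ H) (k : H) : G := t.out * k * s.out⁻¹

theorem blockIndex_injective (t s : G ⧸ H) : Function.Injective (blockIndex H t s) := by
  intro k₁ k₂ hk
  simpa [blockIndex] using hk

theorem mem_range_blockIndex_iff (t s : G ⧸ H) (g : G) :
    g ∈ Set.range (blockIndex H t s) ↔ ((g⁻¹ * t.out : G) : G ⧸ H) = s := by
  conv_rhs => rw [← QuotientGroup.out_eq' s, QuotientGroup.eq]
  constructor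
  · rintro ⟨k, rfl⟩
    simp [blockIndex, mul_assoc]
  · intro hg
    exact ⟨⟨_, hg⟩, by simp [blockIndex, mul_assoc]⟩

def blockEntry (t s : G ⧸ H) (a : MonoidAlgebra ℂ G) : MonoidAlgebra ℂ H :=
  MonoidAlgebra.ofCoeff <|
    a.coeff.comapDomain (blockIndex H t s) (blockIndex_injective H t s).injOn

@[simp]
theorem blockEntry_coeff (t s : G ⧸ H) (a : MonoidAlgebra ℂ G) (k : H) :
    (blockEntry H t s a).coeff k = a.coeff (blockIndex H t s k) := rfl

theorem conv_blockEntry [DecidableEq (G ⧸ H)] (t s : G ⧸ H) (a : MonoidAlgebra ℂ G) (x : G → ℂ)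
    (k : H) :
    conv (blockEntry H t s a) (fun h : H => x (s.out * h)) k
      = ∑ g ∈ a.coeff.support with ((g⁻¹ * t.out : G) : G ⧸ H) = s,
          a.coeff g * x (g⁻¹ * (t.out * k)) := by
  classical
  have hsupp : (blockEntry H t s a).coeff.support
      = a.coeff.support.preimage _ (blockIndex_injective H t s).injOn :=
    Finsupp.comapDomain_support _ _ _
  simp_rw [conv, hsupp, Finset.filter_congr fun g _ => (mem_range_blockIndex_iff H t s g).symm]
  rw [← Finset.sum_preimage' _ _ (blockIndex_injective H t s).injOn]
  refine Finset.sum_congr rfl fun κ _ => ?_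
  simp only [blockEntry_coeff, blockIndex, Subgroup.coe_mul, Subgroup.coe_inv]
  congr 2
  group

theorem sum_conv_blockEntry [Fintype (G ⧸ H)] (t : G ⧸ H) (a : MonoidAlgebra ℂ G)
    (x : G → ℂ) (k : H) :
    ∑ s, conv (blockEntry H t s a) (fun h : H => x (s.out * h)) k = conv a x (t.out * k) := by
  classical
  simp_rw [conv_blockEntry]
  exact Finset.sum_fiberwise a.coeff.support (fun g => ((g⁻¹ * t.out : G) : G ⧸ H)) _

end Cosets

theorem conv_comp_mul_right (a : MonoidAlgebra ℂ G) (x : G → ℂ) (c g : G) :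
    conv a (fun g' => x (g' * c)) g = conv a x (g * c) := by
  simp only [conv, mul_assoc]

section RightTranslation

variable {m n : ℕ} (A : Matrix (Fin m) (Fin n) (MonoidAlgebra ℂ G))

theorem mem_matrixKernel_iff {x : L2 G n} :
    x ∈ matrixKernel A ↔ ∀ i g, ∑ j, conv (A i j) (fun g' => x (j, g')) g = 0 := Iff.rfl

theorem mem_matrixKernel_of_translate {x y : L2 G n} (c : G)
    (hxy : ∀ j g, y (j, g) = x (j, g * c)) (hx : x ∈ matrixKernel A) : y ∈ matrixKernel A := by
  rw [mem_matrixKernel_iff] at hx ⊢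
  intro i g
  rw [← hx i (g * c)]
  refine Finset.sum_congr rfl fun j _ => ?_
  rw [show (fun g' => y (j, g')) = fun g' => x (j, g' * c) from funext (hxy j)]
  exact conv_comp_mul_right (A i j) (fun g' => x (j, g')) c g

theorem map_matrixKernel_lpCongr_mulRight (c : G) :
    (matrixKernel A).map
        (lpCongr ℂ ((Equiv.refl (Fin n)).prodCongr (Equiv.mulRight c))).toLinearEquiv.toLinearMap
      = matrixKernel A := by
  ext x
  rw [Submodule.mem_map_equiv]
  constructor
  · exact mem_matrixKernel_of_translate A c⁻¹ fun j g => by simp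
  · exact mem_matrixKernel_of_translate A c fun j g => by simp

theorem closureProjCoeff_matrixKernel_single [DecidableEq G] (j : Fin n) (g : G) :
    closureProjCoeff (matrixKernel A) (lp.single 2 (j, g) 1)
      = closureProjCoeff (matrixKernel A) (stdVec G n j) := by
  have hU := closureProjCoeff_map (lpCongr ℂ ((Equiv.refl (Fin n)).prodCongr (Equiv.mulRight g)))
    (matrixKernel A) (stdVec G n j)
  rw [map_matrixKernel_lpCongr_mulRight, stdVec_eq_single, lpCongr_single] at hU
  simpa [stdVec_eq_single] using hU

end RightTranslation

section BlockMatrix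

variable {H : Subgroup G} {r : ℕ} (σ : Fin r ≃ G ⧸ H)

def blockMatrix {m n : ℕ} (A : Matrix (Fin m) (Fin n) (MonoidAlgebra ℂ G)) :
    Matrix (Fin (m * r)) (Fin (n * r)) (MonoidAlgebra ℂ H) :=
  Matrix.of fun i j =>
    let it := finProdFinEquiv.symm i
    let js := finProdFinEquiv.symm j
    blockEntry H (σ it.2) (σ js.2) (A it.1 js.1)

theorem blockMatrix_finProdFinEquiv {m n : ℕ} (A : Matrix (Fin m) (Fin n) (MonoidAlgebra ℂ G))
    (i : Fin m) (t : Fin r) (j : Fin n) (s : Fin r) :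
    blockMatrix σ A (finProdFinEquiv (i, t)) (finProdFinEquiv (j, s))
      = blockEntry H (σ t) (σ s) (A i j) := by
  simp only [blockMatrix, Matrix.of_apply, Equiv.symm_apply_apply]

def blockIndexEquiv (n : ℕ) : Fin (n * r) × H ≃ Fin n × G :=
  (finProdFinEquiv.symm.prodCongr (Equiv.refl H)).trans <|
    (Equiv.prodAssoc _ _ _).trans <|
      (Equiv.refl _).prodCongr <| (σ.prodCongr (Equiv.refl H)).trans (cosetEquiv H)

@[simp]
theorem blockIndexEquiv_finProdFinEquiv {n : ℕ} (j : Fin n) (s : Fin r) (h : H) :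
    blockIndexEquiv σ n (finProdFinEquiv (j, s), h) = (j, (σ s).out * h) := by
  simp [blockIndexEquiv]

theorem sum_conv_blockMatrix {m n : ℕ} (A : Matrix (Fin m) (Fin n) (MonoidAlgebra ℂ G))
    (x : Fin n × G → ℂ) (i : Fin m) (t : Fin r) (k : H) :
    ∑ j', conv (blockMatrix σ A (finProdFinEquiv (i, t)) j')
        (fun h => x (blockIndexEquiv σ n (j', h))) k
      = ∑ j, conv (A i j) (fun g => x (j, g)) ((σ t).out * k) := by
  let _ : Fintype (G ⧸ H) := Fintype.ofEquiv _ σ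
  rw [← finProdFinEquiv.sum_comp, Fintype.sum_prod_type]
  refine Finset.sum_congr rfl fun j _ => ?_
  rw [← sum_conv_blockEntry, ← σ.sum_comp]
  simp only [blockMatrix_finProdFinEquiv, blockIndexEquiv_finProdFinEquiv]

theorem map_matrixKernel_blockMatrix {m n : ℕ} (A : Matrix (Fin m) (Fin n) (MonoidAlgebra ℂ G)) :
    (matrixKernel (blockMatrix σ A)).map
        (lpCongr ℂ (blockIndexEquiv σ n)).toLinearEquiv.toLinearMap
      = matrixKernel A := by
  ext x
  rw [Submodule.mem_map_equiv, mem_matrixKernel_iff, mem_matrixKernel_iff]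
  constructor
  · intro hx i g
    obtain ⟨⟨c, k⟩, rfl⟩ := (cosetEquiv H).surjective g
    have h := (sum_conv_blockMatrix σ A x i (σ.symm c) k).symm.trans (hx _ k)
    rwa [σ.apply_symm_apply] at h
  · intro hx i' k
    obtain ⟨⟨i, t⟩, rfl⟩ := finProdFinEquiv.surjective i'
    exact (sum_conv_blockMatrix σ A x i t k).trans (hx i _)

theorem dimKer_blockMatrix {m n : ℕ} (A : Matrix (Fin m) (Fin n) (MonoidAlgebra ℂ G)) :
    dimKer (blockMatrix σ A) = r * dimKer A := by
  classical
  have hcoeff : ∀ j s, closureProjCoeff (matrixKernel (blockMatrix σ A))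
      (stdVec H (n * r) (finProdFinEquiv (j, s)))
        = closureProjCoeff (matrixKernel A) (stdVec G n j) := by
    intro j s
    rw [← closureProjCoeff_map (lpCongr ℂ (blockIndexEquiv σ n)), map_matrixKernel_blockMatrix,
      stdVec_eq_single, lpCongr_single, blockIndexEquiv_finProdFinEquiv,
      closureProjCoeff_matrixKernel_single]
  rw [dimKer_eq_sum, dimKer_eq_sum, ← finProdFinEquiv.sum_comp, Fintype.sum_prod_type]
  simp [hcoeff, Finset.mul_sum]

end BlockMatrix

theorem atiyah_of_finite_index_general (G : Type*) [Group G] (K : Subring ℂ)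
    (Λ : AddSubgroup ℚ)
    (H : Subgroup G) (n : ℕ) (hn : 0 < n) (hidx : H.index = n)
    (h : AtiyahOfOrder H K Λ) :
    AtiyahOfOrder G K
      (Λ.map (AddMonoidHom.mk' (fun q : ℚ => q / (n : ℚ)) (fun a b => add_div a b _))) := by
  intro m l A hA
  have : H.FiniteIndex := ⟨hidx ▸ hn.ne'⟩
  let σ : Fin n ≃ G ⧸ H := (Finite.equivFinOfCardEq hidx).symm
  obtain ⟨q, hqΛ, hq⟩ := h _ _ (blockMatrix σ A) fun _ _ _ => hA _ _ _
  refine ⟨q / n, AddSubgroup.mem_map_of_mem _ hqΛ, ?_⟩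
  rw [dimKer_blockMatrix] at hq
  have hn' : (n : ℝ) ≠ 0 := Nat.cast_ne_zero.2 hn.ne'
  rw [Rat.cast_div, Rat.cast_natCast, hq, mul_div_cancel_left₀ _ hn']

/-- **Proposition (finite extensions).** If `H` is a subgroup of index `n` in `G` and
`H` fulfills the Atiyah conjecture of order `Λ ⊆ ℚ` over `KH`, then `G` fulfills the
Atiyah conjecture of order `(1/n)Λ` over `KG`. -/
theorem atiyah_of_finite_index (G : Type*) [Group G] (K : Subring ℂ)
    (Λ : AddSubgroup ℚ) (hΛ : (1 : ℚ) ∈ Λ)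
    (H : Subgroup G) (n : ℕ) (hn : 0 < n) (hidx : H.index = n)
    (h : AtiyahOfOrder H K Λ) :
    AtiyahOfOrder G K
      (Λ.map (AddMonoidHom.mk' (fun q : ℚ => q / (n : ℚ)) (fun a b => add_div a b _))) :=
  atiyah_of_finite_index_general G K Λ H n hn hidx h
end
end

section
/- Let K be a subring of ℂ and ℤ ⊆ Λ ⊆ ℚ an additive subgroup. If a group G fulfills the Atiyah conjecture of order Λ over KG, then every subgroup U of G fulfills the Atiyah conjecture of order Λ over KU. -/
/-!
Let `φ : H →* G` be injective. Extension by zero `ι : ℓ²(H)ⁿ → ℓ²(G)ⁿ` along `φ` has the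
restriction `ρ` as adjoint and satisfies `ρ ∘ ι = id`. Convolution with an element of `ℂH`
commutes with both maps, so `ι` and `ρ` carry the kernel of a matrix `A` over `ℂH` into the
kernel of its image over `ℂG` and back. An adjoint pair of this kind intertwines the orthogonal
projections onto the closed kernels, and `ι eᵢ = eᵢ`, so the two matrices have the same
`⟨P eᵢ, eᵢ⟩` for every `i`, hence the same kernel dimension.
-/

noncomputable section

open scoped ENNReal

variable {G : Type*} [Group G]

open Function

theorem Function.Injective.extend_single {α β M : Type*} [DecidableEq α] [DecidableEq β] [Zero M]
    {e : α → β} (he : Injective e) (a : α) (c : M) :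
    extend e (Pi.single a c) 0 = Pi.single (e a) c := by
  funext b
  by_cases hb : ∃ a', e a' = b
  · obtain ⟨a', rfl⟩ := hb
    simp only [he.extend_apply, Pi.single_apply, he.eq_iff]
  · rw [extend_apply' _ _ _ hb, Pi.single_eq_of_ne, Pi.zero_apply]
    rintro rfl
    exact hb ⟨a, rfl⟩

theorem Function.extend_prodMap_id_apply {γ α β δ : Type*} [Zero δ] {φ : α → β}
    (hφ : Injective φ) (f : γ × α → δ) (c : γ) (b : β) :
    extend (Prod.map id φ) f 0 (c, b) = extend φ (fun a => f (c, a)) 0 b := by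
  by_cases hb : ∃ a, φ a = b
  · obtain ⟨a, rfl⟩ := hb
    rw [hφ.extend_apply]
    exact (injective_id.prodMap hφ).extend_apply f 0 (c, a)
  · rw [extend_apply' _ _ _ hb, extend_apply' _ _ _ ?_, Pi.zero_apply, Pi.zero_apply]
    rintro ⟨⟨_, a⟩, h⟩
    exact hb ⟨a, congrArg Prod.snd h⟩

theorem MonoidAlgebra.coeff_mapDomain_mem {R M N S : Type*} [Semiring R] [SetLike S R]
    [AddSubmonoidClass S R] {K : S} (f : M → N) {a : MonoidAlgebra R M}
    (ha : ∀ m, a.coeff m ∈ K) (n : N) : (mapDomain f a).coeff n ∈ K := by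
  classical
  rw [coeff_mapDomain, Finsupp.mapDomain, Finsupp.sum_apply]
  refine sum_mem fun m _ => ?_
  dsimp only
  rw [Finsupp.single_apply]
  split_ifs
  exacts [ha m, zero_mem K]

section ExtendByZero

variable {𝕜 α β : Type*} [RCLike 𝕜] {e : α → β}

theorem memℓp_comp_of_injective (he : Injective e) (y : lp (fun _ : β => 𝕜) 2) :
    Memℓp (y ∘ e) 2 :=
  memℓp_gen (((memℓp_gen_iff (by norm_num)).1 y.2).comp_injective he)

theorem memℓp_extend_zero (he : Injective e) (x : lp (fun _ : α => 𝕜) 2) :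
    Memℓp (extend e x 0) 2 := by
  refine memℓp_gen ?_
  simp_rw [apply_extend (fun c : 𝕜 => ‖c‖ ^ (2 : ℝ≥0∞).toReal), comp_def, Pi.zero_apply, norm_zero,
    Real.zero_rpow (by norm_num : (2 : ℝ≥0∞).toReal ≠ 0), ← Pi.zero_def, summable_extend_zero he]
  exact (memℓp_gen_iff (by norm_num)).1 x.2

variable (𝕜) in
def lpComp (he : Injective e) : lp (fun _ : β => 𝕜) 2 →ₗ[𝕜] lp (fun _ : α => 𝕜) 2 where
  toFun y := ⟨y ∘ e, memℓp_comp_of_injective he y⟩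
  map_add' _ _ := rfl
  map_smul' _ _ := rfl

variable (𝕜) in
def lpExtendZero (he : Injective e) : lp (fun _ : α => 𝕜) 2 →ₗ[𝕜] lp (fun _ : β => 𝕜) 2 where
  toFun x := ⟨extend e x 0, memℓp_extend_zero he x⟩
  map_add' x y := lp.ext (map_add (ExtendByZero.hom 𝕜 e) (x : α → 𝕜) y)
  map_smul' c x := lp.ext (map_smul (ExtendByZero.linearMap 𝕜 e) c (x : α → 𝕜))

theorem coe_lpComp (he : Injective e) (y : lp (fun _ : β => 𝕜) 2) :
    ⇑(lpComp 𝕜 he y) = y ∘ e := rfl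

theorem coe_lpExtendZero (he : Injective e) (x : lp (fun _ : α => 𝕜) 2) :
    ⇑(lpExtendZero 𝕜 he x) = extend e x 0 := rfl

theorem lpComp_lpExtendZero (he : Injective e) (x : lp (fun _ : α => 𝕜) 2) :
    lpComp 𝕜 he (lpExtendZero 𝕜 he x) = x :=
  lp.ext (extend_comp he _ _)

theorem inner_lpExtendZero (he : Injective e) (x : lp (fun _ : α => 𝕜) 2)
    (y : lp (fun _ : β => 𝕜) 2) :
    inner 𝕜 (lpExtendZero 𝕜 he x) y = inner 𝕜 x (lpComp 𝕜 he y) := by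
  rw [lp.inner_eq_tsum, lp.inner_eq_tsum, ← he.tsum_eq]
  · simp only [coe_lpExtendZero, coe_lpComp, he.extend_apply, comp_apply]
  · intro b hb
    by_contra h
    rw [mem_support, coe_lpExtendZero, extend_apply' _ _ _ fun ⟨a, ha⟩ => h ⟨a, ha⟩, Pi.zero_apply,
      inner_zero_left] at hb
    exact hb rfl

end ExtendByZero

section AdjointRetract

variable {𝕜 E F : Type*} [RCLike 𝕜] [NormedAddCommGroup E] [InnerProductSpace 𝕜 E]
  [NormedAddCommGroup F] [InnerProductSpace 𝕜 F] {ι : E →ₗ[𝕜] F} {ρ : F →ₗ[𝕜] E}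

theorem norm_map_of_adjoint_retract (hadj : ∀ x y, inner 𝕜 (ι x) y = inner 𝕜 x (ρ y))
    (hρι : ∀ x, ρ (ι x) = x) (x : E) : ‖ι x‖ = ‖x‖ := by
  refine (sq_eq_sq₀ (norm_nonneg _) (norm_nonneg _)).1 ?_
  rw [@norm_sq_eq_re_inner 𝕜, @norm_sq_eq_re_inner 𝕜, hadj, hρι]

theorem norm_map_le_of_adjoint_retract (hadj : ∀ x y, inner 𝕜 (ι x) y = inner 𝕜 x (ρ y))
    (hρι : ∀ x, ρ (ι x) = x) (y : F) : ‖ρ y‖ ≤ ‖y‖ := by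
  rcases (norm_nonneg (ρ y)).eq_or_lt with h | h
  · rw [← h]; exact norm_nonneg y
  refine le_of_mul_le_mul_left ?_ h
  calc ‖ρ y‖ * ‖ρ y‖ = RCLike.re (inner 𝕜 (ι (ρ y)) y) := by
        rw [hadj, ← inner_self_eq_norm_mul_norm (𝕜 := 𝕜)]
    _ ≤ ‖ι (ρ y)‖ * ‖y‖ := re_inner_le_norm _ _
    _ = ‖ρ y‖ * ‖y‖ := by rw [norm_map_of_adjoint_retract hadj hρι]

theorem starProjection_map_of_adjoint (hadj : ∀ x y, inner 𝕜 (ι x) y = inner 𝕜 x (ρ y))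
    {S : Submodule 𝕜 E} {T : Submodule 𝕜 F} [S.HasOrthogonalProjection]
    [T.HasOrthogonalProjection] (hS : S.map ι ≤ T) (hT : T.map ρ ≤ S) (v : E) :
    T.starProjection (ι v) = ι (S.starProjection v) := by
  refine T.eq_starProjection_of_mem_of_inner_eq_zero (hS ⟨_, S.starProjection_apply_mem v, rfl⟩)
    fun w hw => ?_
  rw [← map_sub, hadj]
  exact S.starProjection_inner_eq_zero v _ (hT ⟨w, hw, rfl⟩)

theorem topologicalClosure_map_le_of_map_le {S : Submodule 𝕜 E} {T : Submodule 𝕜 F}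
    (f : E →L[𝕜] F) (h : S.map (f : E →ₗ[𝕜] F) ≤ T) :
    S.topologicalClosure.map (f : E →ₗ[𝕜] F) ≤ T.topologicalClosure :=
  (S.topologicalClosure_map f).trans (Submodule.topologicalClosure_mono h)

theorem inner_starProjection_topologicalClosure_map [CompleteSpace E] [CompleteSpace F]
    (hadj : ∀ x y, inner 𝕜 (ι x) y = inner 𝕜 x (ρ y)) (hρι : ∀ x, ρ (ι x) = x)
    {S : Submodule 𝕜 E} {T : Submodule 𝕜 F} (hS : S.map ι ≤ T) (hT : T.map ρ ≤ S) (v : E) :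
    inner 𝕜 (T.topologicalClosure.starProjection (ι v)) (ι v) =
      inner 𝕜 (S.topologicalClosure.starProjection v) v := by
  have hS' := topologicalClosure_map_le_of_map_le
    (ι.mkContinuous 1 fun x => by rw [one_mul, norm_map_of_adjoint_retract hadj hρι]) hS
  have hT' := topologicalClosure_map_le_of_map_le
    (ρ.mkContinuous 1 fun y => by rw [one_mul]; exact norm_map_le_of_adjoint_retract hadj hρι y) hT
  rw [starProjection_map_of_adjoint hadj hS' hT', hadj, hρι]

end AdjointRetract

section MapDomain

variable {H : Type*} [Group H] {φ : H →* G}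

theorem conv_eq_sum (a : MonoidAlgebra ℂ G) (x : G → ℂ) (g : G) :
    conv a x g = a.coeff.sum fun h c => c * x (h⁻¹ * g) := rfl

theorem conv_mapDomain_apply (hφ : Injective φ) (a : MonoidAlgebra ℂ H) (x : G → ℂ) (h : H) :
    conv (MonoidAlgebra.mapDomain φ a) x (φ h) = conv a (x ∘ φ) h := by
  rw [conv_eq_sum, conv_eq_sum, MonoidAlgebra.coeff_mapDomain,
    Finsupp.sum_mapDomain_index_inj hφ]
  simp only [comp_apply, map_mul, map_inv]

theorem conv_mapDomain_extend (hφ : Injective φ) (a : MonoidAlgebra ℂ H) (f : H → ℂ) :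
    conv (MonoidAlgebra.mapDomain φ a) (extend φ f 0) = extend φ (conv a f) 0 := by
  funext g
  by_cases hg : ∃ h, φ h = g
  · obtain ⟨h, rfl⟩ := hg
    rw [conv_mapDomain_apply hφ, extend_comp hφ, hφ.extend_apply]
  · rw [extend_apply' _ _ _ hg, conv_eq_sum, MonoidAlgebra.coeff_mapDomain,
      Finsupp.sum_mapDomain_index_inj hφ, Pi.zero_apply]
    refine Finset.sum_eq_zero fun h _ => ?_
    dsimp only
    rw [extend_apply' _ _ _ ?_, Pi.zero_apply, mul_zero]
    rintro ⟨h', hh'⟩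
    exact hg ⟨h * h', by rw [map_mul, hh', mul_inv_cancel_left]⟩

variable {m n : ℕ}

theorem map_lpExtendZero_matrixKernel_le (hφ : Injective φ)
    (A : Matrix (Fin m) (Fin n) (MonoidAlgebra ℂ H)) :
    (matrixKernel A).map (lpExtendZero ℂ (injective_id.prodMap hφ)) ≤
      matrixKernel (A.map (MonoidAlgebra.mapDomain φ)) := by
  rintro _ ⟨x, hx, rfl⟩ i g
  simp only [Matrix.map_apply, coe_lpExtendZero, extend_prodMap_id_apply hφ,
    conv_mapDomain_extend hφ]
  by_cases hg : ∃ h, φ h = g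
  · obtain ⟨h, rfl⟩ := hg
    simpa only [hφ.extend_apply] using hx i h
  · simp only [extend_apply' _ _ _ hg, Pi.zero_apply, Finset.sum_const_zero]

theorem map_lpComp_matrixKernel_le (hφ : Injective φ)
    (A : Matrix (Fin m) (Fin n) (MonoidAlgebra ℂ H)) :
    (matrixKernel (A.map (MonoidAlgebra.mapDomain φ))).map (lpComp ℂ (injective_id.prodMap hφ)) ≤
      matrixKernel A := by
  rintro _ ⟨y, hy, rfl⟩ i h
  have hyh := hy i (φ h)
  simp only [Matrix.map_apply, conv_mapDomain_apply hφ] at hyh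
  exact hyh

theorem lpExtendZero_stdVec (hφ : Injective φ) (i : Fin n) :
    lpExtendZero ℂ (injective_id.prodMap hφ) (stdVec H n i) = stdVec G n i := by
  classical
  ext1
  simp only [coe_lpExtendZero, stdVec, lp.coeFn_single,
    (injective_id.prodMap hφ).extend_single, Prod.map_apply, id, map_one]
  -- `stdVec` uses `Classical.decEq`, not the instance `classical` provides.
  congr!

theorem dimKer_eq_of_adjoint_retract {m' : ℕ}
    {A : Matrix (Fin m) (Fin n) (MonoidAlgebra ℂ H)}
    {B : Matrix (Fin m') (Fin n) (MonoidAlgebra ℂ G)}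
    {ι : L2 H n →ₗ[ℂ] L2 G n} {ρ : L2 G n →ₗ[ℂ] L2 H n}
    (hadj : ∀ x y, inner ℂ (ι x) y = inner ℂ x (ρ y)) (hρι : ∀ x, ρ (ι x) = x)
    (hA : (matrixKernel A).map ι ≤ matrixKernel B) (hB : (matrixKernel B).map ρ ≤ matrixKernel A)
    (hstd : ∀ i, ι (stdVec H n i) = stdVec G n i) :
    dimKer B = dimKer A := by
  refine Finset.sum_congr rfl fun i _ => ?_
  rw [← hstd i]
  exact congrArg RCLike.re (inner_starProjection_topologicalClosure_map hadj hρι hA hB _)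

theorem dimKer_map_mapDomain (hφ : Injective φ)
    (A : Matrix (Fin m) (Fin n) (MonoidAlgebra ℂ H)) :
    dimKer (A.map (MonoidAlgebra.mapDomain φ)) = dimKer A :=
  dimKer_eq_of_adjoint_retract (inner_lpExtendZero _) (lpComp_lpExtendZero _)
    (map_lpExtendZero_matrixKernel_le hφ A) (map_lpComp_matrixKernel_le hφ A)
    (lpExtendZero_stdVec hφ)

theorem AtiyahOfOrder.of_injective {K : Subring ℂ} {Λ : AddSubgroup ℚ}
    (h : AtiyahOfOrder G K Λ) (hφ : Injective φ) : AtiyahOfOrder H K Λ := by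
  intro m n A hA
  obtain ⟨q, hq, hqA⟩ := h m n (A.map (MonoidAlgebra.mapDomain φ))
    fun i j => MonoidAlgebra.coeff_mapDomain_mem φ (hA i j)
  exact ⟨q, hq, hqA.trans (dimKer_map_mapDomain hφ A)⟩

end MapDomain

theorem atiyah_of_subgroup_general (G : Type*) [Group G] (K : Subring ℂ)
    (Λ : AddSubgroup ℚ)
    (h : AtiyahOfOrder G K Λ) (U : Subgroup G) :
    AtiyahOfOrder U K Λ :=
  h.of_injective U.subtype_injective

/-- **Proposition (subgroups).** If `G` fulfills the Atiyah conjecture of order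
`Λ ⊆ ℚ` over `KG` and `U ≤ G`, then `U` fulfills the Atiyah conjecture of order `Λ`
over `KU`. -/
theorem atiyah_of_subgroup (G : Type*) [Group G] (K : Subring ℂ)
    (Λ : AddSubgroup ℚ) (hΛ : (1 : ℚ) ∈ Λ)
    (h : AtiyahOfOrder G K Λ) (U : Subgroup G) :
    AtiyahOfOrder U K Λ :=
  atiyah_of_subgroup_general G K Λ h U
end
end
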